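/- There exists a constant C > 0 such that for every θ ∈ [−π, π] and every twice continuously differentiable π-periodic function u : ℝ → ℂ, one has (∫_0^π |u''(y)|² dy)^{1/2} ≤ (2/π²) (∫_0^π |π² u''(y) + 2iθπ u'(y) + (4π² − θ²) u(y)|² dy)^{1/2} + C (∫_0^π |u(y)|² dy)^{1/2}. -/

import Mathlib

/-!
Write `‖·‖` for the `L²(0, π)` norm and `ℒ u = π²u'' + 2iθπu' + (4π² − θ²)u`. Since `|θ| ≤ π`,
the triangle inequality gives `π²‖u''‖ ≤ ‖ℒ u‖ + 2π²‖u'‖ + 4π²‖u‖`. Integrating by parts, the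
boundary terms cancel by periodicity, so `‖u'‖² = −Re ∫ u'' ū ≤ ‖u''‖ ‖u‖ ≤ (‖u''‖/4 + ‖u‖)²`.
Hence `2π²‖u'‖ ≤ π²‖u''‖/2 + 2π²‖u‖`, and absorbing `π²‖u''‖/2` into the left-hand side gives
`‖u''‖ ≤ (2/π²)‖ℒ u‖ + 12‖u‖`.
-/

open MeasureTheory Real Complex ComplexConjugate Set

namespace MeasureTheory

variable {α : Type*} [MeasurableSpace α] {μ : Measure α}

section NormedAddCommGroup

variable {E : Type*} [NormedAddCommGroup E]

theorem MemLp.sqrt_integral_norm_sq_eq {f : α → E} (hf : MemLp f 2 μ) :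
    √(∫ x, ‖f x‖ ^ 2 ∂μ) = (eLpNorm f 2 μ).toReal := by
  rw [hf.eLpNorm_eq_integral_rpow_norm two_ne_zero ENNReal.ofNat_ne_top,
    ENNReal.toReal_ofReal (by positivity)]
  simp [Real.sqrt_eq_rpow]

theorem sqrt_integral_norm_sub_sq_le {f g : α → E} (hf : MemLp f 2 μ) (hg : MemLp g 2 μ) :
    √(∫ x, ‖f x - g x‖ ^ 2 ∂μ) ≤ √(∫ x, ‖f x‖ ^ 2 ∂μ) + √(∫ x, ‖g x‖ ^ 2 ∂μ) := by
  have hfg := (hf.sub hg).sqrt_integral_norm_sq_eq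
  simp only [Pi.sub_apply] at hfg
  rw [hfg, hf.sqrt_integral_norm_sq_eq, hg.sqrt_integral_norm_sq_eq]
  exact ENNReal.toReal_le_add (eLpNorm_sub_le hf.1 hg.1 one_le_two) hf.eLpNorm_ne_top
    hg.eLpNorm_ne_top

theorem integral_norm_mul_norm_le {f g : α → E} (hf : MemLp f 2 μ) (hg : MemLp g 2 μ) :
    ∫ x, ‖f x‖ * ‖g x‖ ∂μ ≤ √(∫ x, ‖f x‖ ^ 2 ∂μ) * √(∫ x, ‖g x‖ ^ 2 ∂μ) := by
  have h := integral_mul_norm_le_Lp_mul_Lq .two_two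
    (by rwa [ENNReal.ofReal_ofNat]) (by rwa [ENNReal.ofReal_ofNat]) (f := f) (g := g) (μ := μ)
  simpa [Real.sqrt_eq_rpow] using h

end NormedAddCommGroup

theorem sqrt_integral_norm_const_mul_sq {𝕜 : Type*} [NormedDivisionRing 𝕜] (c : 𝕜)
    (f : α → 𝕜) : √(∫ x, ‖c * f x‖ ^ 2 ∂μ) = ‖c‖ * √(∫ x, ‖f x‖ ^ 2 ∂μ) := by
  simp_rw [norm_mul, mul_pow]
  rw [integral_const_mul, Real.sqrt_mul (by positivity), Real.sqrt_sq (norm_nonneg c)]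

end MeasureTheory

theorem Continuous.memLp_restrict_Ioc {E : Type*} [NormedAddCommGroup E] {f : ℝ → E}
    (hf : Continuous f) (a b : ℝ) (p : ENNReal) : MemLp f p (volume.restrict (Ioc a b)) := by
  obtain ⟨C, hC⟩ := (isCompact_Icc (a := a) (b := b)).exists_bound_of_continuousOn hf.continuousOn
  refine .of_bound hf.aestronglyMeasurable C ((ae_restrict_iff' measurableSet_Ioc).2 ?_)
  exact .of_forall fun x hx => hC x (Ioc_subset_Icc_self hx)

theorem Function.Periodic.deriv {𝕜 F : Type*} [NontriviallyNormedField 𝕜] [NormedAddCommGroup F]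
    [NormedSpace 𝕜 F] {f : 𝕜 → F} {c : 𝕜} (hf : Function.Periodic f c) :
    Function.Periodic (deriv f) c := fun x => by
  rw [← deriv_comp_add_const, funext hf]

theorem integral_norm_deriv_sq_eq_neg_re_integral {u : ℝ → ℂ} {a b : ℝ} (hu : ContDiff ℝ 2 u)
    (hua : u a = u b) (hu'a : deriv u a = deriv u b) :
    ∫ x in a..b, ‖deriv u x‖ ^ 2 = -(∫ x in a..b, deriv (deriv u) x * conj (u x)).re := by
  have hu' : ContDiff ℝ 1 (deriv u) := hu.deriv'
  have h₀ : Continuous u := hu.continuous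
  have h₁ : Continuous (deriv u) := hu'.continuous
  have h₂ : Continuous (deriv (deriv u)) := hu'.continuous_deriv le_rfl
  have hibp := intervalIntegral.integral_deriv_mul_eq_sub (a := a) (b := b)
    (fun x _ => (hu'.differentiable one_ne_zero x).hasDerivAt)
    (fun x _ => ((hu.differentiable two_ne_zero x).hasDerivAt).star)
    (h₂.intervalIntegrable _ _) (h₁.star.intervalIntegrable _ _)
  rw [hua, hu'a, sub_self, intervalIntegral.integral_add
    (by apply Continuous.intervalIntegrable; fun_prop)
    (by apply Continuous.intervalIntegrable; fun_prop)] at hibp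
  have hnorm : ∫ x in a..b, deriv u x * star (deriv u x) =
      ((∫ x in a..b, ‖deriv u x‖ ^ 2 : ℝ) : ℂ) := by
    rw [← intervalIntegral.integral_ofReal]
    simp [Complex.mul_conj, Complex.normSq_eq_norm_sq]
  rw [← Complex.ofReal_re (∫ x in a..b, ‖deriv u x‖ ^ 2), ← hnorm,
    eq_neg_of_add_eq_zero_right hibp]
  simp

theorem integral_norm_deriv_sq_le {u : ℝ → ℂ} {a b : ℝ} (hab : a ≤ b) (hu : ContDiff ℝ 2 u)
    (hua : u a = u b) (hu'a : deriv u a = deriv u b) :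
    ∫ x in Ioc a b, ‖deriv u x‖ ^ 2 ≤
      √(∫ x in Ioc a b, ‖deriv (deriv u) x‖ ^ 2) * √(∫ x in Ioc a b, ‖u x‖ ^ 2) := by
  rw [← intervalIntegral.integral_of_le hab,
    integral_norm_deriv_sq_eq_neg_re_integral hu hua hu'a, intervalIntegral.integral_of_le hab]
  calc _ ≤ ‖∫ x in Ioc a b, deriv (deriv u) x * conj (u x)‖ :=
        (neg_le_abs _).trans (abs_re_le_norm _)
    _ ≤ ∫ x in Ioc a b, ‖deriv (deriv u) x‖ * ‖u x‖ :=
        (norm_integral_le_integral_norm _).trans_eq (by simp)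
    _ ≤ _ := integral_norm_mul_norm_le
        ((hu.deriv'.continuous_deriv le_rfl).memLp_restrict_Ioc a b 2)
        (hu.continuous.memLp_restrict_Ioc a b 2)

theorem sqrt_integral_norm_deriv_sq_le {u : ℝ → ℂ} {a b : ℝ} (hab : a ≤ b)
    (hu : ContDiff ℝ 2 u) (hua : u a = u b) (hu'a : deriv u a = deriv u b) {ε : ℝ} (hε : 0 < ε) :
    √(∫ x in Ioc a b, ‖deriv u x‖ ^ 2) ≤
      ε * √(∫ x in Ioc a b, ‖deriv (deriv u) x‖ ^ 2) + √(∫ x in Ioc a b, ‖u x‖ ^ 2) / (4 * ε) := by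
  refine Real.sqrt_le_iff.2 ⟨by positivity, (integral_norm_deriv_sq_le hab hu hua hu'a).trans ?_⟩
  convert four_mul_le_sq_add (ε * √(∫ x in Ioc a b, ‖deriv (deriv u) x‖ ^ 2))
    (√(∫ x in Ioc a b, ‖u x‖ ^ 2) / (4 * ε)) using 1
  field_simp

theorem pi_sq_mul_sqrt_integral_le_bloch {α : Type*} [MeasurableSpace α] {μ : Measure α}
    {f₀ f₁ f₂ : α → ℂ} (h₀ : MemLp f₀ 2 μ) (h₁ : MemLp f₁ 2 μ) (h₂ : MemLp f₂ 2 μ) {θ : ℝ}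
    (hθ : |θ| ≤ π) :
    π ^ 2 * √(∫ y, ‖f₂ y‖ ^ 2 ∂μ) ≤
      √(∫ y, ‖(π : ℂ) ^ 2 * f₂ y + 2 * I * θ * π * f₁ y + (4 * π ^ 2 - θ ^ 2) * f₀ y‖ ^ 2 ∂μ)
        + 2 * π ^ 2 * √(∫ y, ‖f₁ y‖ ^ 2 ∂μ) + 4 * π ^ 2 * √(∫ y, ‖f₀ y‖ ^ 2 ∂μ) := by
  set b : ℂ := 2 * I * θ * π
  set c : ℂ := 4 * π ^ 2 - θ ^ 2
  have hb : ‖b‖ ≤ 2 * π ^ 2 := by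
    simp only [b, norm_mul, norm_I, Complex.norm_real, Complex.norm_ofNat, norm_eq_abs,
      abs_of_pos pi_pos]
    nlinarith [pi_pos]
  have hc : ‖c‖ ≤ 4 * π ^ 2 := by
    have hθ2 : θ ^ 2 ≤ π ^ 2 := sq_le_sq.2 (by rwa [abs_of_pos pi_pos])
    rw [show c = ((4 * π ^ 2 - θ ^ 2 : ℝ) : ℂ) by push_cast; rfl, Complex.norm_real, norm_eq_abs,
      abs_of_nonneg (by nlinarith [pi_pos])]
    nlinarith [sq_nonneg θ]
  have hLf : MemLp (fun y => (π : ℂ) ^ 2 * f₂ y + b * f₁ y + c * f₀ y) 2 μ :=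
    ((h₂.const_mul _).add (h₁.const_mul _)).add (h₀.const_mul _)
  have hLf₁ : MemLp (fun y => (π : ℂ) ^ 2 * f₂ y + b * f₁ y + c * f₀ y - b * f₁ y) 2 μ :=
    hLf.sub (h₁.const_mul b)
  have hf₂ : ∀ y, (π : ℂ) ^ 2 * f₂ y =
      (π : ℂ) ^ 2 * f₂ y + b * f₁ y + c * f₀ y - b * f₁ y - c * f₀ y := fun y => by ring
  calc π ^ 2 * √(∫ y, ‖f₂ y‖ ^ 2 ∂μ)
      = √(∫ y, ‖(π : ℂ) ^ 2 * f₂ y‖ ^ 2 ∂μ) := by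
        rw [sqrt_integral_norm_const_mul_sq, norm_pow, Complex.norm_real, norm_eq_abs,
          abs_of_pos pi_pos]
    _ ≤ √(∫ y, ‖(π : ℂ) ^ 2 * f₂ y + b * f₁ y + c * f₀ y - b * f₁ y‖ ^ 2 ∂μ)
          + √(∫ y, ‖c * f₀ y‖ ^ 2 ∂μ) := by
        simpa only [← hf₂] using sqrt_integral_norm_sub_sq_le hLf₁ (h₀.const_mul c)
    _ ≤ √(∫ y, ‖(π : ℂ) ^ 2 * f₂ y + b * f₁ y + c * f₀ y‖ ^ 2 ∂μ)
          + √(∫ y, ‖b * f₁ y‖ ^ 2 ∂μ) + √(∫ y, ‖c * f₀ y‖ ^ 2 ∂μ) := by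
        gcongr
        exact sqrt_integral_norm_sub_sq_le hLf (h₁.const_mul _)
    _ ≤ _ := by
        simp_rw [sqrt_integral_norm_const_mul_sq]
        gcongr

theorem bloch_second_derivative_bound :
    ∃ C : ℝ, 0 < C ∧
      ∀ θ ∈ Set.Icc (-π) π, ∀ u : ℝ → ℂ, ContDiff ℝ 2 u →
        (∀ y, u (y + π) = u y) →
        Real.sqrt (∫ y in (0:ℝ)..π, ‖deriv (deriv u) y‖ ^ 2)
          ≤ (2 / π ^ 2) * Real.sqrt (∫ y in (0:ℝ)..π,
              ‖(π : ℂ) ^ 2 * deriv (deriv u) y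
                + 2 * Complex.I * (θ : ℂ) * (π : ℂ) * deriv u y
                + ((4 * (π : ℂ) ^ 2 - (θ : ℂ) ^ 2)) * u y‖ ^ 2)
            + C * Real.sqrt (∫ y in (0:ℝ)..π, ‖u y‖ ^ 2) := by
  refine ⟨12, by norm_num, fun θ hθ u hu hper => ?_⟩
  have hu' : ContDiff ℝ 1 (deriv u) := hu.deriv'
  simp only [intervalIntegral.integral_of_le pi_pos.le]
  have hB := sqrt_integral_norm_deriv_sq_le pi_pos.le hu (by simpa using (hper 0).symm)
    (by simpa using (Function.Periodic.deriv hper 0).symm) (ε := 1 / 4) (by norm_num)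
  have hA := pi_sq_mul_sqrt_integral_le_bloch (hu.continuous.memLp_restrict_Ioc 0 π 2)
    (hu'.continuous.memLp_restrict_Ioc 0 π 2)
    ((hu'.continuous_deriv le_rfl).memLp_restrict_Ioc 0 π 2) (abs_le.2 hθ)
  have hpi : 0 < π ^ 2 := by positivity
  norm_num at hB
  rw [div_mul_eq_mul_div, div_add' _ _ _ hpi.ne', le_div_iff₀ hpi]
  nlinarith
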